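/- arXiv:math/0306422 — 4 statements merged into one kernel-verified Lean document; each statement's English description precedes it below -/
import Mathlib

section
/- With SG = ∗_{x∈X} SG_x as above, let Ŷ = {g x̂ g⁻¹ : g ∈ F(X), x ∈ X} ⊂ SG and let F⁺(Ŷ) be the free monoid on Ŷ. Then SG decomposes as a semidirect product SG = F⁺(Ŷ) ⋊ F(X), where F(X) acts on F⁺(Ŷ) by conjugation. -/
/-- `SG = ∗_{x ∈ X} SG_x`, the free product of copies `SG_x ≅ ℤ × ℕ` (written
multiplicatively), with generators `x = (1,0)`, `x⁻¹ = (-1,0)` and `x̂ = (0,1)`. -/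
abbrev SGMonoid (X : Type*) := Monoid.CoprodI (fun _ : X => Multiplicative (ℤ × ℕ))

/-- The generator `x` of the copy `SG_x` in `SG`. -/
def sgX {X : Type*} (x : X) : SGMonoid X :=
  Monoid.CoprodI.of (i := x) (Multiplicative.ofAdd ((1 : ℤ), (0 : ℕ)))

/-- The generator `x⁻¹` of the copy `SG_x` in `SG`. -/
def sgXinv {X : Type*} (x : X) : SGMonoid X :=
  Monoid.CoprodI.of (i := x) (Multiplicative.ofAdd ((-1 : ℤ), (0 : ℕ)))

/-- The generator `x̂` of the copy `SG_x` in `SG`. -/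
def sgXhat {X : Type*} (x : X) : SGMonoid X :=
  Monoid.CoprodI.of (i := x) (Multiplicative.ofAdd ((0 : ℤ), (1 : ℕ)))

/-- The generator `x` of `SG`, as a unit (with inverse `x⁻¹`). -/
def sgXUnit {X : Type*} (x : X) : (SGMonoid X)ˣ where
  val := sgX x
  inv := sgXinv x
  val_inv := by
    rw [sgX, sgXinv, ← map_mul, ← ofAdd_add]
    norm_num
    exact map_one _
  inv_val := by
    rw [sgX, sgXinv, ← map_mul, ← ofAdd_add]
    norm_num
    exact map_one _

/-- The natural embedding `F(X) → SG` sending each generator to `x` (a unit of `SG`). -/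
def freeGroupToSG {X : Type*} : FreeGroup X →* SGMonoid X :=
  (Units.coeHom (SGMonoid X)).comp (FreeGroup.lift (fun x : X => sgXUnit x))

/-- `Ŷ = {g x̂ g⁻¹ ; g ∈ F(X), x ∈ X} ⊆ SG`. -/
def YhatSet (X : Type*) : Set (SGMonoid X) :=
  {u | ∃ (g : FreeGroup X) (x : X),
    u = freeGroupToSG g * sgXhat x * freeGroupToSG g⁻¹}

/-! The inverse of the multiplication map `F⁺(Ŷ) ⋊ F(X) → SG` is the homomorphism sending
`x ↦ (1, x)` and `x̂ ↦ (x̂, 1)`; it is well defined on each factor `SG_x ≅ ℤ × ℕ` because `x`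
fixes `x̂` under conjugation. The multiplication map `(w, g) ↦ w g` is a homomorphism out of the
semidirect product because `g w = (g • w) g` in `SG`, and both composites are the identity on
generators. -/

/-- The semidirect product of monoids `N ⋊ G` for an action `φ` of `G` on `N` by monoid
endomorphisms: `(n, g) * (n', g') = (n * φ g n', g * g')`. -/
@[ext]
structure MonoidSemidirectProduct (N G : Type*) [Monoid N] [Monoid G]
    (φ : G →* Monoid.End N) where
  left : N
  right : G

namespace MonoidSemidirectProduct

variable {N G M : Type*} [Monoid N] [Monoid G] [Monoid M] {φ : G →* Monoid.End N}

instance : Monoid (MonoidSemidirectProduct N G φ) where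
  mul p q := ⟨p.left * φ p.right q.left, p.right * q.right⟩
  one := ⟨1, 1⟩
  one_mul p := by
    change MonoidSemidirectProduct.mk (1 * φ 1 p.left) (1 * p.right) = p
    simp only [map_one, Monoid.End.coe_one, id_eq, one_mul]
  mul_one p := by
    change MonoidSemidirectProduct.mk (p.left * φ p.right 1) (p.right * 1) = p
    rw [map_one, mul_one, mul_one]
  mul_assoc p q r := by
    change MonoidSemidirectProduct.mk (p.left * φ p.right q.left * φ (p.right * q.right) r.left)
        (p.right * q.right * r.right) =
      ⟨p.left * φ p.right (q.left * φ q.right r.left), p.right * (q.right * r.right)⟩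
    simp only [map_mul, Monoid.End.coe_mul, Function.comp_apply, mul_assoc]

@[simp] lemma mk_mul_mk (n n' : N) (g g' : G) :
    (⟨n, g⟩ * ⟨n', g'⟩ : MonoidSemidirectProduct N G φ) = ⟨n * φ g n', g * g'⟩ := rfl

@[simp] lemma one_def : (1 : MonoidSemidirectProduct N G φ) = ⟨1, 1⟩ := rfl

variable (φ) in
def inl : N →* MonoidSemidirectProduct N G φ where
  toFun n := ⟨n, 1⟩
  map_one' := rfl
  map_mul' n n' := by simp

variable (N) in
def inr : G →* MonoidSemidirectProduct N G φ where
  toFun g := ⟨1, g⟩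
  map_one' := rfl
  map_mul' g g' := by simp

@[simp] lemma inl_apply (n : N) : inl φ n = (⟨n, 1⟩ : MonoidSemidirectProduct N G φ) := rfl

@[simp] lemma inr_apply (g : G) : inr N g = (⟨1, g⟩ : MonoidSemidirectProduct N G φ) := rfl

lemma inr_mul_inl_mul_inr_inv {G : Type*} [Group G] {φ : G →* Monoid.End N} (g : G) (n : N) :
    inr N g * inl φ n * inr N g⁻¹ = inl φ (φ g n) := by simp

def lift (f : N →* M) (u : G →* M) (hfu : ∀ g n, u g * f n = f (φ g n) * u g) :
    MonoidSemidirectProduct N G φ →* M where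
  toFun p := f p.left * u p.right
  map_one' := by simp
  map_mul' p q := by
    change f (p.left * φ p.right q.left) * u (p.right * q.right) = _
    simp only [map_mul, mul_assoc]
    rw [← mul_assoc (u p.right), hfu, mul_assoc]

@[simp] lemma lift_apply (f : N →* M) (u : G →* M) (hfu) (p : MonoidSemidirectProduct N G φ) :
    lift f u hfu p = f p.left * u p.right := rfl

def equivProd : MonoidSemidirectProduct N G φ ≃ N × G where
  toFun p := (p.left, p.right)
  invFun p := ⟨p.1, p.2⟩
  left_inv _ := rfl
  right_inv _ := rfl

end MonoidSemidirectProduct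

def FreeMonoid.mapSMulHom (G α : Type*) [Monoid G] [MulAction G α] :
    G →* Monoid.End (FreeMonoid α) where
  toFun g := FreeMonoid.map (g • ·)
  map_one' := FreeMonoid.hom_eq fun a => congrArg FreeMonoid.of (one_smul G a)
  map_mul' g h := FreeMonoid.hom_eq fun a => congrArg FreeMonoid.of (mul_smul g h a)

@[simp] lemma FreeMonoid.mapSMulHom_of {G α : Type*} [Monoid G] [MulAction G α] (g : G) (a : α) :
    FreeMonoid.mapSMulHom G α g (FreeMonoid.of a) = FreeMonoid.of (g • a) := rfl

section

variable {X : Type*}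

@[simp] lemma freeGroupToSG_mul_inv (g : FreeGroup X) :
    freeGroupToSG g * freeGroupToSG g⁻¹ = 1 := by
  rw [← map_mul, mul_inv_cancel, map_one]

@[simp] lemma freeGroupToSG_inv_mul (g : FreeGroup X) :
    freeGroupToSG g⁻¹ * freeGroupToSG g = 1 := by
  rw [← map_mul, inv_mul_cancel, map_one]

@[simp] lemma freeGroupToSG_inv_mul_mul (g : FreeGroup X) (s : SGMonoid X) :
    freeGroupToSG g⁻¹ * (freeGroupToSG g * s) = s := by
  rw [← mul_assoc, freeGroupToSG_inv_mul, one_mul]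

lemma freeGroupToSG_of_zpow (x : X) (n : ℤ) :
    freeGroupToSG (FreeGroup.of x ^ n) =
      Monoid.CoprodI.of (i := x) (Multiplicative.ofAdd (n, 0)) := by
  induction n using Int.induction_on with
  | zero => rw [zpow_zero, map_one, Prod.mk_zero_zero, ofAdd_zero, map_one]
  | succ k ih =>
    rw [zpow_add_one, map_mul, ih]
    simp [freeGroupToSG, sgXUnit, sgX, ← map_mul, ← ofAdd_add]
  | pred k ih =>
    rw [zpow_sub_one, map_mul, ih]
    simp [freeGroupToSG, sgXUnit, sgXinv, ← map_mul, ← ofAdd_add, sub_eq_add_neg]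

lemma sgXhat_pow (x : X) (m : ℕ) :
    sgXhat x ^ m = Monoid.CoprodI.of (i := x) (Multiplicative.ofAdd ((0 : ℤ), m)) := by
  simp [sgXhat, ← map_pow, ← ofAdd_nsmul]

namespace YhatSet

lemma conj_mem (g : FreeGroup X) {u : SGMonoid X} (hu : u ∈ YhatSet X) :
    freeGroupToSG g * u * freeGroupToSG g⁻¹ ∈ YhatSet X := by
  obtain ⟨h, x, rfl⟩ := hu
  exact ⟨g * h, x, by simp only [mul_inv_rev, map_mul, mul_assoc]⟩

instance : SMul (FreeGroup X) (YhatSet X) := ⟨fun g y => ⟨_, conj_mem g y.2⟩⟩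

@[simp] lemma coe_smul (g : FreeGroup X) (y : YhatSet X) :
    ((g • y : YhatSet X) : SGMonoid X) = freeGroupToSG g * y * freeGroupToSG g⁻¹ := rfl

instance : MulAction (FreeGroup X) (YhatSet X) where
  one_smul y := Subtype.ext (by simp)
  mul_smul g h y := Subtype.ext (by simp [mul_assoc])

def xhat (x : X) : YhatSet X := ⟨sgXhat x, 1, x, by simp⟩

/-- `x̂` is fixed by conjugation with powers of `x`, both living in the commutative factor
`SG_x`. -/
lemma zpow_smul_xhat (x : X) (n : ℤ) : (FreeGroup.of x ^ n) • xhat x = xhat x := by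
  apply Subtype.ext
  have hcomm : Commute (freeGroupToSG (FreeGroup.of x ^ n)) (sgXhat x) := by
    rw [freeGroupToSG_of_zpow, sgXhat]
    exact (Commute.all _ _).map _
  rw [coe_smul, xhat, hcomm.eq, mul_assoc, freeGroupToSG_mul_inv, mul_one]

end YhatSet

/-- The monoid `F⁺(Ŷ) ⋊ F(X)`. -/
abbrev SGSemidirect (X : Type*) :=
  MonoidSemidirectProduct (FreeMonoid (YhatSet X)) (FreeGroup X)
    (FreeMonoid.mapSMulHom (FreeGroup X) (YhatSet X))

open MonoidSemidirectProduct

def sgFactorToSemidirect (x : X) : Multiplicative (ℤ × ℕ) →* SGSemidirect X where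
  toFun p := ⟨FreeMonoid.of (YhatSet.xhat x) ^ p.toAdd.2, FreeGroup.of x ^ p.toAdd.1⟩
  map_one' := by simp
  map_mul' p q := by
    ext
    · simp [pow_add, map_pow, YhatSet.zpow_smul_xhat]
    · simp [zpow_add]

def sgToSemidirect : SGMonoid X →* SGSemidirect X :=
  Monoid.CoprodI.lift sgFactorToSemidirect

lemma sgToSemidirect_freeGroupToSG (g : FreeGroup X) :
    sgToSemidirect (freeGroupToSG g) = inr _ g := by
  suffices h : sgToSemidirect.comp freeGroupToSG = inr (FreeMonoid (YhatSet X)) from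
    DFunLike.congr_fun h g
  refine FreeGroup.ext_hom _ _ fun x => ?_
  simp [sgToSemidirect, sgFactorToSemidirect, freeGroupToSG, sgXUnit, sgX]

lemma sgToSemidirect_coe (y : YhatSet X) :
    sgToSemidirect (y : SGMonoid X) = inl _ (FreeMonoid.of y) := by
  obtain ⟨g, x, hy⟩ := y.2
  have hxhat : sgToSemidirect (sgXhat x) = inl _ (FreeMonoid.of (YhatSet.xhat x)) := by
    simp [sgToSemidirect, sgFactorToSemidirect, sgXhat]
  have hconj : g • YhatSet.xhat x = y := Subtype.ext hy.symm
  rw [hy, map_mul, map_mul, sgToSemidirect_freeGroupToSG, sgToSemidirect_freeGroupToSG, hxhat,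
    inr_mul_inl_mul_inr_inv, FreeMonoid.mapSMulHom_of, hconj]

lemma sgToSemidirect_lift (w : FreeMonoid (YhatSet X)) :
    sgToSemidirect (FreeMonoid.lift (fun y : YhatSet X => (y : SGMonoid X)) w) = inl _ w := by
  suffices h : sgToSemidirect.comp (FreeMonoid.lift fun y : YhatSet X => (y : SGMonoid X)) =
      inl _ from DFunLike.congr_fun h w
  exact FreeMonoid.hom_eq fun y => by simp [sgToSemidirect_coe]

lemma freeGroupToSG_mul_lift (g : FreeGroup X) (w : FreeMonoid (YhatSet X)) :
    freeGroupToSG g * FreeMonoid.lift (fun y : YhatSet X => (y : SGMonoid X)) w =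
      FreeMonoid.lift (fun y : YhatSet X => (y : SGMonoid X))
        (FreeMonoid.mapSMulHom (FreeGroup X) (YhatSet X) g w) * freeGroupToSG g := by
  induction w using FreeMonoid.inductionOn' with
  | one => simp
  | of_mul y w ih => simp [← ih, mul_assoc]

def semidirectToSG : SGSemidirect X →* SGMonoid X :=
  lift (FreeMonoid.lift fun y : YhatSet X => (y : SGMonoid X)) freeGroupToSG
    freeGroupToSG_mul_lift

lemma semidirectToSG_comp_sgToSemidirect :
    semidirectToSG.comp sgToSemidirect = MonoidHom.id (SGMonoid X) := by
  refine Monoid.CoprodI.ext_hom _ _ fun x => MonoidHom.ext fun p => ?_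
  simp only [MonoidHom.comp_apply, sgToSemidirect, Monoid.CoprodI.lift_of, MonoidHom.id_apply]
  simp [semidirectToSG, sgFactorToSemidirect, YhatSet.xhat, freeGroupToSG_of_zpow, sgXhat_pow,
    ← map_mul, ← ofAdd_add]

lemma sgToSemidirect_comp_semidirectToSG :
    sgToSemidirect.comp semidirectToSG = MonoidHom.id (SGSemidirect X) := by
  ext p <;>
  simp [semidirectToSG, sgToSemidirect_lift, sgToSemidirect_freeGroupToSG]

def sgEquivSemidirect : SGMonoid X ≃* SGSemidirect X :=
  MonoidHom.toMulEquiv sgToSemidirect semidirectToSG semidirectToSG_comp_sgToSemidirect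
    sgToSemidirect_comp_semidirectToSG

end

/-- **Lemma 4.4.** `SG = F⁺(Ŷ) ⋊ F(X)`: every element of `SG` is uniquely a product
`w · g` with `w` in the free monoid on `Ŷ` and `g ∈ F(X)`, i.e. the multiplication map
`F⁺(Ŷ) × F(X) → SG` is a bijection. (The set `Ŷ` is invariant under conjugation by
`F(X)`, so this is exactly the semidirect product decomposition for the conjugation
action of `F(X)` on `F⁺(Ŷ)`.) -/
theorem sg_semidirect (X : Type*) :
    Function.Bijective (fun p : FreeMonoid (YhatSet X) × FreeGroup X =>
      (FreeMonoid.lift (fun y : YhatSet X => (y : SGMonoid X))) p.1 *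
        freeGroupToSG p.2) := by
  exact sgEquivSemidirect.symm.bijective.comp MonoidSemidirectProduct.equivProd.symm.bijective
end

section
/- Let F(X) be a free group on X with distinguished element x₀ ∈ X, and set Z = {h x₀ h⁻¹ : h ∈ F(X∖{x₀})}. Then the set Z freely generates the subgroup F(Z) of F(X) that it generates, i.e. F(Z) is a free group with free basis Z. -/
open FreeGroup SemidirectProduct in
/-- Let `F(X)` be a free group, `x₀ ∈ X`, and
`Z = {h x₀ h⁻¹ ; h ∈ F(X ∖ {x₀})}`. Then `Z` freely generates the subgroup `F(Z)`
of `F(X)` that it generates; i.e. the canonical map from the free group on `Z` to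
`F(X)` is injective. -/
theorem conjugates_freely_generate {X : Type*} (x₀ : X)
    (Z : Set (FreeGroup X))
    (hZ : Z = {z | ∃ h ∈ Subgroup.closure (FreeGroup.of '' {x | x ≠ x₀}),
      z = h * FreeGroup.of x₀ * h⁻¹}) :
    Function.Injective (FreeGroup.lift (fun z : Z => (z : FreeGroup X))) := by
  classical
  set X' := {x : X // x ≠ x₀} with hX'
  set A := FreeGroup X' with hA
  -- the action of `A` on `FreeGroup A` permuting generators by left multiplication
  have hmulLeft : ∀ a b : A, (Equiv.mulLeft b).trans (Equiv.mulLeft a)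
      = Equiv.mulLeft (a * b) := by
    intro a b; ext x; simp [mul_assoc]
  let act : A →* MulAut (FreeGroup A) := MonoidHom.mk'
    (fun a => FreeGroup.freeGroupCongr (Equiv.mulLeft a))
    (by intro a b
        show _ = (freeGroupCongr (Equiv.mulLeft b)).trans (freeGroupCongr (Equiv.mulLeft a))
        rw [freeGroupCongr_trans, hmulLeft])
  have act_of : ∀ a b : A, act a (FreeGroup.of b) = FreeGroup.of (a * b) := by
    intro a b; rfl
  -- the embedding `Φ : FreeGroup X →* FreeGroup A ⋊ A`
  let Φ : FreeGroup X →* FreeGroup A ⋊[act] A := FreeGroup.lift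
    (fun x => if h : x = x₀ then inl (FreeGroup.of (1 : A))
      else inr (FreeGroup.of (⟨x, h⟩ : X')))
  -- the retraction `π : FreeGroup X →* A` and the section `ι : A →* FreeGroup X`
  let π : FreeGroup X →* A := FreeGroup.lift
    (fun x => if h : x = x₀ then 1 else FreeGroup.of (⟨x, h⟩ : X'))
  let ι : A →* FreeGroup X := FreeGroup.lift (fun a => FreeGroup.of a.val)
  have key : ∀ h ∈ Subgroup.closure (FreeGroup.of '' {x | x ≠ x₀}),
      Φ h = inr (π h) ∧ ι (π h) = h := by
    intro h hh
    induction hh using Subgroup.closure_induction with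
    | mem x hx =>
      obtain ⟨y, hy, rfl⟩ := hx
      constructor
      · show Φ (FreeGroup.of y) = inr (π (FreeGroup.of y))
        simp only [Φ, π, FreeGroup.lift_apply_of, dif_neg hy]
      · show ι (π (FreeGroup.of y)) = FreeGroup.of y
        simp only [π, FreeGroup.lift_apply_of, dif_neg hy, ι]
        exact FreeGroup.lift_apply_of
    | one => simp
    | mul x y hx hy ihx ihy => simp [_root_.map_mul, ihx.1, ihx.2, ihy.1, ihy.2]
    | inv x hx ihx => simp [_root_.map_inv, ihx.1, ihx.2]
  -- compute `Φ` on elements of `Z`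
  have hΦz : ∀ z : Z, ∃ a : A, Φ z = inl (FreeGroup.of a) ∧ ι a * FreeGroup.of x₀ * (ι a)⁻¹ = z := by
    rintro ⟨z, hz⟩
    rw [hZ] at hz
    obtain ⟨h, hh, rfl⟩ := hz
    obtain ⟨h1, h2⟩ := key h hh
    refine ⟨π h, ?_, by rw [h2]⟩
    have : Φ (FreeGroup.of x₀) = inl (FreeGroup.of (1 : A)) := by
      simp [Φ]
    simp only [_root_.map_mul, _root_.map_inv, h1, this]
    rw [← _root_.map_inv, ← inl_aut, act_of, mul_one]
  choose a ha1 ha2 using hΦz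
  -- `a` is injective
  have ha_inj : Function.Injective a := by
    intro z z' h
    have := ha2 z
    rw [h, ha2 z'] at this
    exact (Subtype.ext this).symm
  -- the composite `Φ ∘ lift` is `inl ∘ map a`
  have hcomp : ∀ w : FreeGroup Z,
      Φ (FreeGroup.lift (fun z : Z => (z : FreeGroup X)) w) = inl (FreeGroup.map a w) := by
    intro w
    have : Φ.comp (FreeGroup.lift (fun z : Z => (z : FreeGroup X)))
        = (inl : FreeGroup A →* FreeGroup A ⋊[act] A).comp (FreeGroup.map a) := by
      apply FreeGroup.ext_hom
      intro z
      simp only [MonoidHom.comp_apply, FreeGroup.lift_apply_of, FreeGroup.map.of]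
      exact ha1 z
    exact DFunLike.congr_fun this w
  -- `FreeGroup.map a` is injective
  have hZne : Nonempty Z := ⟨⟨FreeGroup.of x₀, by
    rw [hZ]; exact ⟨1, Subgroup.one_mem _, by simp⟩⟩⟩
  obtain ⟨g, hg⟩ := ha_inj.hasLeftInverse
  have hmap_inj : Function.Injective (FreeGroup.map a : FreeGroup Z → FreeGroup A) := by
    intro w w' h
    have : FreeGroup.map g (FreeGroup.map a w) = FreeGroup.map g (FreeGroup.map a w') := by
      rw [h]
    rwa [FreeGroup.map.comp, FreeGroup.map.comp,
      show g ∘ a = id from funext hg, FreeGroup.map.id, FreeGroup.map.id] at this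
  intro w w' h
  have h2 : (inl (FreeGroup.map a w) : FreeGroup A ⋊[act] A) = inl (FreeGroup.map a w') := by
    rw [← hcomp, ← hcomp, h]
  exact hmap_inj (inl_injective h2)
end

section
/- Let x₀ ∈ X and Z = {h x₀ h⁻¹ : h ∈ F(X∖{x₀})} ⊆ F(X). Then the full conjugacy class of x₀ in F(X) satisfies {g x₀ g⁻¹ : g ∈ F(X)} = {β z β⁻¹ : β ∈ F(Z), z ∈ Z}, where F(Z) is the subgroup of F(X) generated by Z. -/
/-!
Let `H = F(X ∖ {x₀})` and `N = F(Z)`. Conjugation by `H` permutes `Z`, so `H` normalizes `N`;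
since `N ⊔ H` contains `x₀` and every other generator, it is all of `F(X)`, and therefore
every `g` factors as `g = β h` with `β ∈ N`, `h ∈ H`. Then `g x₀ g⁻¹ = β (h x₀ h⁻¹) β⁻¹`.
-/

open Subgroup

open scoped Pointwise

namespace Subgroup

variable {G : Type*} [Group G]

def conjugatesBy (H : Subgroup G) (a : G) : Set G :=
  {z | ∃ h ∈ H, z = h * a * h⁻¹}

variable {H : Subgroup G} {a : G}

theorem self_mem_conjugatesBy : a ∈ H.conjugatesBy a :=
  ⟨1, one_mem H, by group⟩

theorem conj_mem_conjugatesBy {h z : G} (hh : h ∈ H) (hz : z ∈ H.conjugatesBy a) :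
    h * z * h⁻¹ ∈ H.conjugatesBy a := by
  obtain ⟨k, hk, rfl⟩ := hz
  exact ⟨h * k, mul_mem hh hk, by group⟩

theorem conj_image_conjugatesBy {h : G} (hh : h ∈ H) :
    MulAut.conj h '' H.conjugatesBy a = H.conjugatesBy a := by
  refine subset_antisymm ?_ fun z hz => ⟨h⁻¹ * z * h⁻¹⁻¹, ?_, by simp [mul_assoc]⟩
  · rintro _ ⟨z, hz, rfl⟩
    exact conj_mem_conjugatesBy hh hz
  · exact conj_mem_conjugatesBy (inv_mem hh) hz

theorem le_normalizer_closure_conjugatesBy :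
    H ≤ normalizer (closure (H.conjugatesBy a) : Set G) := fun h hh => by
  rw [mem_normalizer_iff_map_conj_eq, MonoidHom.map_closure]
  exact congrArg closure (conj_image_conjugatesBy hh)

theorem closure_conjugatesBy_sup_self :
    closure (H.conjugatesBy a) ⊔ H = zpowers a ⊔ H := by
  apply le_antisymm
  · refine sup_le (closure_le _ |>.mpr ?_) le_sup_right
    rintro _ ⟨h, hh, rfl⟩
    exact mul_mem (mul_mem (mem_sup_right hh) (mem_sup_left (mem_zpowers a)))
      (mem_sup_right (inv_mem hh))
  · refine sup_le ?_ le_sup_right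
    rw [zpowers_eq_closure, closure_le, Set.singleton_subset_iff]
    exact mem_sup_left (subset_closure self_mem_conjugatesBy)

theorem coe_zpowers_sup_eq_closure_conjugatesBy_mul :
    ((zpowers a ⊔ H : Subgroup G) : Set G) = (closure (H.conjugatesBy a) : Set G) * (H : Set G) := by
  rw [← closure_conjugatesBy_sup_self,
    coe_mul_of_right_le_normalizer_left _ _ le_normalizer_closure_conjugatesBy]

theorem conjugates_eq_conj_closure_conjugatesBy (hG : zpowers a ⊔ H = ⊤) :
    {y | ∃ g : G, y = g * a * g⁻¹} =
      {y | ∃ β ∈ closure (H.conjugatesBy a), ∃ z ∈ H.conjugatesBy a, y = β * z * β⁻¹} := by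
  ext y
  constructor
  · rintro ⟨g, rfl⟩
    have hg : g ∈ ((zpowers a ⊔ H : Subgroup G) : Set G) := by simp [hG]
    rw [coe_zpowers_sup_eq_closure_conjugatesBy_mul] at hg
    obtain ⟨β, hβ, h, hh, rfl⟩ := hg
    exact ⟨β, hβ, h * a * h⁻¹, ⟨h, hh, rfl⟩, by group⟩
  · rintro ⟨β, -, _, ⟨h, -, rfl⟩, rfl⟩
    exact ⟨β * h, by group⟩

end Subgroup

theorem FreeGroup.zpowers_of_sup_closure_of_ne_eq_top {X : Type*} (x₀ : X) :
    zpowers (FreeGroup.of x₀) ⊔ closure (FreeGroup.of '' {x | x ≠ x₀}) = ⊤ := by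
  rw [zpowers_eq_closure, ← Subgroup.closure_union, eq_top_iff, ← FreeGroup.closure_range_of]
  refine closure_mono ?_
  rintro _ ⟨x, rfl⟩
  by_cases hx : x = x₀
  · exact Or.inl (hx ▸ rfl)
  · exact Or.inr ⟨x, hx, rfl⟩

/-- Let `x₀ ∈ X` and `Z = {h x₀ h⁻¹ ; h ∈ F(X ∖ {x₀})}`. Then the conjugacy class of
`x₀` in `F(X)` satisfies `{g x₀ g⁻¹ ; g ∈ F(X)} = {β z β⁻¹ ; β ∈ F(Z), z ∈ Z}`,
where `F(Z)` is the subgroup generated by `Z`. -/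
theorem conjClass_eq_conj_by_FZ {X : Type*} (x₀ : X)
    (Z : Set (FreeGroup X))
    (hZ : Z = {z | ∃ h ∈ Subgroup.closure (FreeGroup.of '' {x | x ≠ x₀}),
      z = h * FreeGroup.of x₀ * h⁻¹}) :
    {y | ∃ g : FreeGroup X, y = g * FreeGroup.of x₀ * g⁻¹} =
      {y | ∃ β ∈ Subgroup.closure Z, ∃ z ∈ Z, y = β * z * β⁻¹} := by
  subst hZ
  exact conjugates_eq_conj_closure_conjugatesBy (FreeGroup.zpowers_of_sup_closure_of_ne_eq_top x₀)
end

section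
/- For 1 ≤ i < j ≤ n, let Υ_{ij} = {β A_{ij} β⁻¹ : β ∈ PB_n} be the conjugacy class in the pure braid group of the standard generator A_{ij}, and let Υ = {α σ_i² α⁻¹ : α ∈ B_n, 1 ≤ i ≤ n−1}. Then Υ is the disjoint union of the sets Υ_{ij} over 1 ≤ i < j ≤ n. -/
/-- The braid relations on `n - 1` generators `σ₁, …, σ_{n-1}` (indexed by `Fin (n-1)`). -/
def braidRels (n : ℕ) : Set (FreeGroup (Fin (n - 1))) :=
  {r | ∃ i j : Fin (n - 1),
    ((i : ℕ) + 1 < (j : ℕ) ∧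
      r = FreeGroup.of i * FreeGroup.of j * (FreeGroup.of i)⁻¹ * (FreeGroup.of j)⁻¹) ∨
    ((i : ℕ) + 1 = (j : ℕ) ∧
      r = FreeGroup.of i * FreeGroup.of j * FreeGroup.of i *
        (FreeGroup.of j * FreeGroup.of i * FreeGroup.of j)⁻¹)}

/-- The braid group `B_n` on `n` strings. -/
abbrev BraidGroup (n : ℕ) := PresentedGroup (braidRels n)

/-- The standard generator `σ_i` of the braid group. -/
def braidGen {n : ℕ} (i : Fin (n - 1)) : BraidGroup n := PresentedGroup.of i

/-- `σ_k` for a natural number index `k` (`= 1` out of range). -/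
def braidGen' (n : ℕ) (k : ℕ) : BraidGroup n :=
  if h : k < n - 1 then braidGen ⟨k, h⟩ else 1

/-- The standard pure braid generator (0-indexed):
`A i j = σ_{j-1} ⋯ σ_{i+1} σ_i² σ_{i+1}⁻¹ ⋯ σ_{j-1}⁻¹` for `0 ≤ i < j < n`. -/
def pureGen (n : ℕ) (i j : ℕ) : BraidGroup n :=
  (((List.range (j - i - 1)).map (fun t => braidGen' n (j - 1 - t))).prod) *
    (braidGen' n i) ^ 2 *
    (((List.range (j - i - 1)).map (fun t => braidGen' n (j - 1 - t))).prod)⁻¹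

/-- The transposition `(i, i+1)` of `Fin n`. -/
def adjSwap (n : ℕ) (i : Fin (n - 1)) : Equiv.Perm (Fin n) :=
  Equiv.swap ⟨i.1, by have := i.isLt; omega⟩ ⟨i.1 + 1, by have := i.isLt; omega⟩

/-- The conjugacy class `Υ_{ij} = {β A_{ij} β⁻¹ ; β ∈ PB_n}` of `A i j` under the
pure braid group, the latter presented as the kernel of `θ : B_n → Sym_n`. -/
def conjClassA (n : ℕ) (θ : BraidGroup n →* Equiv.Perm (Fin n)) (i j : ℕ) :
    Set (BraidGroup n) :=
  {u | ∃ β ∈ θ.ker, u = β * pureGen n i j * β⁻¹}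

/-- `Υ`: the set of all conjugates of the `σ_i²` in the braid group. -/
def UpsilonSet (n : ℕ) : Set (BraidGroup n) :=
  {u | ∃ (α : BraidGroup n) (i : Fin (n - 1)), u = α * (braidGen i) ^ 2 * α⁻¹}

/-- The commutation graph on a subset `S` of a monoid: two distinct elements are
adjacent iff they commute. -/
def commGraph {M : Type*} [Monoid M] (S : Set M) : SimpleGraph S where
  Adj u v := u ≠ v ∧ (u : M) * v = (v : M) * u
  symm := ⟨fun u v h => ⟨h.1.symm, h.2.symm⟩⟩
  loopless := ⟨fun u h => h.1 rfl⟩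

/-!
Conjugating `A_{rs}` by a generator `σ_k` gives either some `A_{r's'}` or the conjugate of one
by `σ_k² ∈ PB_n`. As `PB_n` is normal and `σ_k⁻¹ = σ_k⁻² σ_k`, the union of the classes `Υ_{ij}`
is invariant under conjugation by `B_n`; it contains `σ_i² = A_{i,i+1}`, so it contains
`Υ`, and conversely every `A_{ij}` is a conjugate of `σ_i²`.

For disjointness, `σ_i ↦ (δ_{(i,i+1)}, (i i+1))` defines a homomorphism from `B_n` to the wreath
product `ℤ^{n × n} ⋊ Sym_n`. It maps `PB_n` into the abelian normal subgroup `ℤ^{n × n}`, hence is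
constant on each `Υ_{ij}`, with value `δ_{(i,j)} + δ_{(j,i)}`: the pairwise linking numbers.
-/

section ConjIdentities

variable {G : Type*} [Group G]

theorem conj_conj_of_commute {u w : G} (h : Commute u w) (v : G) :
    u * (w * v * w⁻¹) * u⁻¹ = w * (u * v * u⁻¹) * w⁻¹ :=
  calc u * (w * v * w⁻¹) * u⁻¹ = (u * w) * v * (u * w)⁻¹ := by group
    _ = (w * u) * v * (w * u)⁻¹ := by rw [h.eq]
    _ = w * (u * v * u⁻¹) * w⁻¹ := by group

theorem conj_conj_sq_of_braid {x y : G} (h : x * y * x = y * x * y) :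
    x * (y * x ^ 2 * y⁻¹) * x⁻¹ = y ^ 2 := by
  have hy : (x * y) * x * (x * y)⁻¹ = y := by rw [h]; group
  calc x * (y * x ^ 2 * y⁻¹) * x⁻¹ = ((x * y) * x * (x * y)⁻¹) ^ 2 := by simp only [sq]; group
    _ = y ^ 2 := by rw [hy]

theorem commute_conj_of_braid {x y p : G} (h : x * y * x = y * x * y) (hp : Commute y p) :
    Commute x ((y * x) * p * (y * x)⁻¹) := by
  have hx : (y * x) * y * (y * x)⁻¹ = x := by rw [← h]; group
  calc x * ((y * x) * p * (y * x)⁻¹) = (x * y * x) * p * (y * x)⁻¹ := by group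
    _ = y * x * (y * p) * (y * x)⁻¹ := by rw [h]; group
    _ = ((y * x) * p * (y * x)⁻¹) * ((y * x) * y * (y * x)⁻¹) := by rw [hp.eq]; group
    _ = ((y * x) * p * (y * x)⁻¹) * x := by rw [hx]

end ConjIdentities

namespace SemidirectProduct

variable {N G : Type*} [CommGroup N] [Group G] {φ : G →* MulAut N}

theorem conj_inl (x : N ⋊[φ] G) (a : N) : x * inl a * x⁻¹ = inl (φ x.right a) := by
  calc x * inl a * x⁻¹
      = inl x.left * (inr x.right * inl a * (inr x.right)⁻¹) * (inl x.left)⁻¹ := by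
        conv_lhs => rw [← inl_left_mul_inr_right x]
        group
    _ = inl x.left * inl (φ x.right a) * (inl x.left)⁻¹ := by rw [inl_aut, map_inv]
    _ = inl (φ x.right a) := by rw [← map_inv, ← map_mul, ← map_mul, mul_inv_cancel_comm]

end SemidirectProduct

section PairFunctions

variable {α G M : Type*} [DecidableEq α] [Group G] [MulAction G α] [Monoid M]

theorem mulAutArrow_mulSingle (π : G) (p : α) (g : M) :
    mulAutArrow π (Pi.mulSingle p g) = Pi.mulSingle (π • p) g := by
  ext q
  change (Pi.mulSingle p g : α → M) (π⁻¹ • q) = _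
  simp only [Pi.mulSingle_apply, inv_smul_eq_iff]

def mulSingleSymm (p : α × α) (g : M) : α × α → M :=
  Pi.mulSingle p g * Pi.mulSingle p.swap g

theorem mulAutArrow_mulSingleSymm (π : G) (p : α × α) (g : M) :
    mulAutArrow π (mulSingleSymm p g) = mulSingleSymm (π • p) g := by
  rw [mulSingleSymm, map_mul, mulAutArrow_mulSingle, mulAutArrow_mulSingle, ← Prod.smul_swap,
    mulSingleSymm]

theorem mulSingleSymm_apply_self {p : α × α} (hp : p.1 ≠ p.2) (g : M) :
    mulSingleSymm p g p = g := by
  have : p ≠ p.swap := fun h => hp (congrArg Prod.fst h)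
  simp [mulSingleSymm, this]

theorem mulSingleSymm_apply_of_ne {p q : α × α} (hp : q ≠ p) (hq : q ≠ p.swap) (g : M) :
    mulSingleSymm p g q = 1 := by
  simp [mulSingleSymm, hp, hq]

end PairFunctions

section AdjSwap

variable {n : ℕ}

def adjPair (i : Fin (n - 1)) : Fin n × Fin n :=
  (⟨i, by have := i.isLt; omega⟩, ⟨i + 1, by have := i.isLt; omega⟩)

theorem adjSwap_apply_val (i : Fin (n - 1)) (x : Fin n) :
    (adjSwap n i x : ℕ) =
      if (x : ℕ) = i then (i : ℕ) + 1 else if (x : ℕ) = (i : ℕ) + 1 then (i : ℕ) else x := by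
  simp only [adjSwap, Equiv.swap_apply_def, Fin.ext_iff]
  split_ifs <;> rfl

theorem adjSwap_smul_adjPair_self (i : Fin (n - 1)) :
    adjSwap n i • adjPair i = (adjPair i).swap := by
  ext <;> simp only [adjPair, Prod.smul_mk, Prod.swap, Equiv.Perm.smul_def, adjSwap_apply_val] <;>
    split_ifs <;> omega

theorem adjSwap_smul_adjPair_of_far {i j : Fin (n - 1)} (h : (i : ℕ) + 1 < j ∨ (j : ℕ) + 1 < i) :
    adjSwap n i • adjPair j = adjPair j := by
  ext <;> simp only [adjPair, Prod.smul_mk, Equiv.Perm.smul_def, adjSwap_apply_val] <;>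
    split_ifs <;> omega

theorem adjSwap_smul_adjPair_braid {i j : Fin (n - 1)} (h : (i : ℕ) + 1 = j) :
    adjSwap n i • adjPair j = adjSwap n j • adjPair i ∧
      adjSwap n i • adjSwap n j • adjPair i = adjPair j ∧
      adjSwap n j • adjSwap n i • adjPair j = adjPair i := by
  refine ⟨?_, ?_, ?_⟩ <;>
  ext <;> simp only [adjPair, Prod.smul_mk, Equiv.Perm.smul_def, adjSwap_apply_val] <;>
    split_ifs <;> omega

theorem adjSwap_mul_comm {i j : Fin (n - 1)} (h : (i : ℕ) + 1 < j) :
    adjSwap n i * adjSwap n j = adjSwap n j * adjSwap n i :=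
  Equiv.ext fun x => Fin.ext <| by
    simp only [Equiv.Perm.mul_apply, adjSwap_apply_val]; split_ifs <;> omega

theorem adjSwap_braid {i j : Fin (n - 1)} (h : (i : ℕ) + 1 = j) :
    adjSwap n i * adjSwap n j * adjSwap n i = adjSwap n j * adjSwap n i * adjSwap n j := by
  ext x
  obtain h0 | h1 | h2 | hx : (x : ℕ) = i ∨ (x : ℕ) = j ∨ (x : ℕ) = j + 1 ∨
    ((x : ℕ) ≠ i ∧ (x : ℕ) ≠ j ∧ (x : ℕ) ≠ j + 1) := by omega
  all_goals simp (disch := omega) only [Equiv.Perm.mul_apply, adjSwap_apply_val, if_pos, if_neg,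
    ↓reduceIte]
  all_goals omega

end AdjSwap

namespace BraidGroup

variable {n : ℕ}

theorem braidGen'_of_lt {k : ℕ} (h : k < n - 1) : braidGen' n k = braidGen ⟨k, h⟩ := dif_pos h

theorem braidGen_mul_comm {i j : Fin (n - 1)} (h : (i : ℕ) + 1 < j) :
    braidGen i * braidGen j = braidGen j * braidGen i :=
  PresentedGroup.mk_eq_mk_of_mul_inv_mem ⟨i, j, Or.inl ⟨h, by group⟩⟩

theorem braidGen_braid {i j : Fin (n - 1)} (h : (i : ℕ) + 1 = j) :
    braidGen i * braidGen j * braidGen i = braidGen j * braidGen i * braidGen j :=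
  PresentedGroup.mk_eq_mk_of_mul_inv_mem ⟨i, j, Or.inr ⟨h, rfl⟩⟩

theorem commute_braidGen' {k m : ℕ} (h : k + 1 < m ∨ m + 1 < k) :
    Commute (braidGen' n k) (braidGen' n m) := by
  unfold braidGen'
  split_ifs
  · rcases h with h | h
    · exact braidGen_mul_comm h
    · exact (braidGen_mul_comm h).symm
  all_goals simp

theorem braidGen'_braid {k : ℕ} (h : k + 1 < n - 1) :
    braidGen' n k * braidGen' n (k + 1) * braidGen' n k =
      braidGen' n (k + 1) * braidGen' n k * braidGen' n (k + 1) := by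
  rw [braidGen'_of_lt (by omega), braidGen'_of_lt h]
  exact braidGen_braid rfl

/-- `σ_{j-1} ⋯ σ_{i+1}` -/
def pureGenConjugator (n i j : ℕ) : BraidGroup n :=
  ((List.range (j - i - 1)).map (fun t => braidGen' n (j - 1 - t))).prod

theorem pureGen_eq_conj (i j : ℕ) :
    pureGen n i j = pureGenConjugator n i j * braidGen' n i ^ 2 * (pureGenConjugator n i j)⁻¹ :=
  rfl

theorem pureGenConjugator_of_le {i j : ℕ} (h : j ≤ i + 1) : pureGenConjugator n i j = 1 := by
  simp [pureGenConjugator, show j - i - 1 = 0 by omega]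

theorem pureGen_succ (i : ℕ) : pureGen n i (i + 1) = braidGen' n i ^ 2 := by
  simp [pureGen_eq_conj, pureGenConjugator_of_le]

theorem pureGenConjugator_succ {i j : ℕ} (h : i < j) :
    pureGenConjugator n i (j + 1) = braidGen' n j * pureGenConjugator n i j := by
  rw [pureGenConjugator, show j + 1 - i - 1 = j - i - 1 + 1 by omega, List.range_succ_eq_map,
    List.map_cons, List.prod_cons, List.map_map, pureGenConjugator]
  congr 2
  exact List.map_congr_left fun t _ => by simp only [Function.comp_apply]; congr 1; omega

theorem pureGenConjugator_split {r m s : ℕ} (hrm : r < m) (hms : m < s) :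
    pureGenConjugator n r s =
      pureGenConjugator n m s * braidGen' n m * pureGenConjugator n r m := by
  induction s, hms using Nat.le_induction with
  | base => rw [pureGenConjugator_succ hrm, pureGenConjugator_of_le le_rfl, one_mul]
  | succ s hms ih =>
    rw [pureGenConjugator_succ (by omega), ih, pureGenConjugator_succ hms, mul_assoc, mul_assoc,
      mul_assoc]

theorem pureGenConjugator_eq_mul {i j : ℕ} (h : i + 1 < j) :
    pureGenConjugator n i j = pureGenConjugator n (i + 1) j * braidGen' n (i + 1) := by
  rw [pureGenConjugator_split (Nat.lt_succ_self i) h, pureGenConjugator_of_le le_rfl, mul_one]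

theorem commute_pureGenConjugator {x : BraidGroup n} {i j : ℕ}
    (h : ∀ m, i < m → m < j → Commute x (braidGen' n m)) :
    Commute x (pureGenConjugator n i j) :=
  Commute.list_prod_right _ _ fun _ hy => by
    obtain ⟨t, ht, rfl⟩ := List.mem_map.1 hy
    rw [List.mem_range] at ht
    exact h _ (by omega) (by omega)

theorem commute_pureGen {x : BraidGroup n} {i j : ℕ} (hi : Commute x (braidGen' n i))
    (h : ∀ m, i < m → m < j → Commute x (braidGen' n m)) :
    Commute x (pureGen n i j) :=
  have hW := commute_pureGenConjugator h
  (hW.mul_right (hi.pow_right 2)).mul_right hW.inv_right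

theorem braidGen'_conj_pureGen_of_eq_right {r k : ℕ} (hrk : r < k) :
    braidGen' n k * pureGen n r k * (braidGen' n k)⁻¹ = pureGen n r (k + 1) := by
  simp only [pureGen_eq_conj, pureGenConjugator_succ hrk, mul_inv_rev, mul_assoc]

theorem braidGen'_conj_pureGen_of_eq_left {k s : ℕ} (hks : k + 1 < s) (hs : s < n) :
    braidGen' n k * pureGen n k s * (braidGen' n k)⁻¹ = pureGen n (k + 1) s := by
  have hW : Commute (braidGen' n k) (pureGenConjugator n (k + 1) s) :=
    commute_pureGenConjugator fun m hm _ => commute_braidGen' (by omega)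
  have hA : pureGen n k s = pureGenConjugator n (k + 1) s *
      (braidGen' n (k + 1) * braidGen' n k ^ 2 * (braidGen' n (k + 1))⁻¹) *
      (pureGenConjugator n (k + 1) s)⁻¹ := by
    simp only [pureGen_eq_conj, pureGenConjugator_eq_mul hks, mul_inv_rev, mul_assoc]
  rw [hA, conj_conj_of_commute hW, conj_conj_sq_of_braid (braidGen'_braid (by omega)),
    pureGen_eq_conj]

theorem commute_braidGen'_pureGen_of_far {k r s : ℕ} (hrs : r < s) (h : s < k ∨ k + 1 < r) :
    Commute (braidGen' n k) (pureGen n r s) :=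
  commute_pureGen (commute_braidGen' (by omega)) fun m _ _ => commute_braidGen' (by omega)

theorem commute_braidGen'_pureGen_of_lt_of_lt {k r s : ℕ} (hrk : r < k) (hks : k + 1 < s)
    (hs : s < n) : Commute (braidGen' n k) (pureGen n r s) := by
  have hW : Commute (braidGen' n k) (pureGenConjugator n (k + 1) s) :=
    commute_pureGenConjugator fun m hm _ => commute_braidGen' (by omega)
  have hA : pureGen n r s = pureGenConjugator n (k + 1) s *
      ((braidGen' n (k + 1) * braidGen' n k) * pureGen n r k *
        (braidGen' n (k + 1) * braidGen' n k)⁻¹) * (pureGenConjugator n (k + 1) s)⁻¹ := by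
    simp only [pureGen_eq_conj, pureGenConjugator_split (by omega : r < k + 1) hks,
      pureGenConjugator_succ hrk, mul_inv_rev, mul_assoc]
  have hP : Commute (braidGen' n (k + 1)) (pureGen n r k) :=
    commute_braidGen'_pureGen_of_far hrk (Or.inl (by omega))
  rw [hA]
  exact (hW.mul_right (commute_conj_of_braid (braidGen'_braid (by omega)) hP)).mul_right
    hW.inv_right

variable {θ : BraidGroup n →* Equiv.Perm (Fin n)}

def pureGenConjugates (n : ℕ) (θ : BraidGroup n →* Equiv.Perm (Fin n)) : Set (BraidGroup n) :=
  {u | ∃ i j, i < j ∧ j < n ∧ u ∈ conjClassA n θ i j}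

theorem pureGen_mem_conjClassA (i j : ℕ) : pureGen n i j ∈ conjClassA n θ i j :=
  ⟨1, one_mem _, by group⟩

theorem conj_mem_pureGenConjugates_of_mem_ker {β u : BraidGroup n} (hβ : β ∈ θ.ker)
    (hu : u ∈ pureGenConjugates n θ) : β * u * β⁻¹ ∈ pureGenConjugates n θ := by
  obtain ⟨i, j, hij, hj, γ, hγ, rfl⟩ := hu
  exact ⟨i, j, hij, hj, β * γ, mul_mem hβ hγ, by group⟩

theorem braidGen_sq_mem_ker (hθ : ∀ i : Fin (n - 1), θ (braidGen i) = adjSwap n i)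
    (i : Fin (n - 1)) : braidGen i ^ 2 ∈ θ.ker := by
  rw [MonoidHom.mem_ker, map_pow, hθ, adjSwap, sq, Equiv.swap_mul_self]

theorem braidGen'_conj_pureGen_mem (hθ : ∀ i : Fin (n - 1), θ (braidGen i) = adjSwap n i)
    {k r s : ℕ} (hk : k < n - 1) (hrs : r < s) (hs : s < n) :
    braidGen' n k * pureGen n r s * (braidGen' n k)⁻¹ ∈ pureGenConjugates n θ := by
  have of_commute (h : Commute (braidGen' n k) (pureGen n r s)) :
      braidGen' n k * pureGen n r s * (braidGen' n k)⁻¹ ∈ pureGenConjugates n θ := by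
    rw [h.mul_inv_cancel]; exact ⟨r, s, hrs, hs, pureGen_mem_conjClassA r s⟩
  have of_sq {r' s' : ℕ} (hrs' : r' < s') (hs' : s' < n)
      (h : pureGen n r s = braidGen' n k * pureGen n r' s' * (braidGen' n k)⁻¹) :
      braidGen' n k * pureGen n r s * (braidGen' n k)⁻¹ ∈ pureGenConjugates n θ := by
    have := conj_mem_pureGenConjugates_of_mem_ker (braidGen'_of_lt hk ▸ braidGen_sq_mem_ker hθ _)
      ⟨r', s', hrs', hs', pureGen_mem_conjClassA r' s'⟩
    rwa [h, show braidGen' n k * (braidGen' n k * pureGen n r' s' * (braidGen' n k)⁻¹) *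
      (braidGen' n k)⁻¹ = braidGen' n k ^ 2 * pureGen n r' s' * (braidGen' n k ^ 2)⁻¹ by
        simp only [sq]; group]
  rcases lt_or_ge s k with hsk | hks
  · exact of_commute (commute_braidGen'_pureGen_of_far hrs (Or.inl hsk))
  obtain rfl | hks := hks.eq_or_lt
  · rw [braidGen'_conj_pureGen_of_eq_right hrs]
    exact ⟨_, _, by omega, by omega, pureGen_mem_conjClassA _ _⟩
  rcases lt_trichotomy r k with hrk | rfl | hkr
  · obtain hs' | rfl := (Nat.succ_le_of_lt hks).lt_or_eq
    · exact of_commute (commute_braidGen'_pureGen_of_lt_of_lt hrk hs' hs)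
    · exact of_sq hrk (by omega) (braidGen'_conj_pureGen_of_eq_right hrk).symm
  · obtain hs' | rfl := (Nat.succ_le_of_lt hks).lt_or_eq
    · rw [braidGen'_conj_pureGen_of_eq_left hs' hs]
      exact ⟨r + 1, s, hs', hs, pureGen_mem_conjClassA _ _⟩
    · exact of_commute (by rw [pureGen_succ]; exact (Commute.refl _).pow_right 2)
  · obtain hr' | rfl := (Nat.succ_le_of_lt hkr).lt_or_eq
    · exact of_commute (commute_braidGen'_pureGen_of_far hrs (Or.inr hr'))
    · exact of_sq (by omega) hs (braidGen'_conj_pureGen_of_eq_left hrs hs).symm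

theorem conj_mem_pureGenConjugates (hθ : ∀ i : Fin (n - 1), θ (braidGen i) = adjSwap n i)
    (α : BraidGroup n) {u : BraidGroup n} (hu : u ∈ pureGenConjugates n θ) :
    α * u * α⁻¹ ∈ pureGenConjugates n θ := by
  have of_gen (i : Fin (n - 1)) {u : BraidGroup n} (hu : u ∈ pureGenConjugates n θ) :
      braidGen i * u * (braidGen i)⁻¹ ∈ pureGenConjugates n θ := by
    obtain ⟨r, s, hrs, hs, β, hβ, rfl⟩ := hu
    rw [← braidGen'_of_lt i.2]
    have hβ' := θ.normal_ker.conj_mem β hβ (braidGen' n i)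
    have := conj_mem_pureGenConjugates_of_mem_ker hβ' (braidGen'_conj_pureGen_mem hθ i.2 hrs hs)
    convert this using 1
    group
  have hα : α ∈ Subgroup.closure (Set.range PresentedGroup.of) := by
    rw [PresentedGroup.closure_range_of]; trivial
  induction hα using Subgroup.closure_induction'' generalizing u with
  | mem _ hx =>
    obtain ⟨i, rfl⟩ := hx
    exact of_gen i hu
  | inv_mem _ hx =>
    obtain ⟨i, rfl⟩ := hx
    have hsq := inv_mem (braidGen_sq_mem_ker hθ i)
    change (braidGen i)⁻¹ * u * (braidGen i)⁻¹⁻¹ ∈ _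
    convert conj_mem_pureGenConjugates_of_mem_ker hsq (of_gen i hu) using 1
    simp only [sq]; group
  | one => simpa using hu
  | mul x y _ _ hx hy =>
    convert hx (hy hu) using 1
    group

theorem upsilonSet_eq_pureGenConjugates (hθ : ∀ i : Fin (n - 1), θ (braidGen i) = adjSwap n i) :
    UpsilonSet n = pureGenConjugates n θ := by
  ext u
  constructor
  · rintro ⟨α, i, rfl⟩
    have hA : braidGen i ^ 2 = pureGen n i (i + 1) := by rw [pureGen_succ, braidGen'_of_lt i.2]
    exact hA ▸ conj_mem_pureGenConjugates hθ α
      ⟨i, i + 1, by omega, by omega, pureGen_mem_conjClassA _ _⟩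
  · rintro ⟨i, j, hij, hj, β, -, rfl⟩
    refine ⟨β * pureGenConjugator n i j, ⟨i, by omega⟩, ?_⟩
    rw [pureGen_eq_conj, braidGen'_of_lt (by omega)]
    group

section Linking

open SemidirectProduct

variable {M : Type*} [CommGroup M]

variable (n M) in
abbrev PairWreathProduct : Type _ := (Fin n × Fin n → M) ⋊[mulAutArrow] Equiv.Perm (Fin n)

def linkingGen (g : M) (i : Fin (n - 1)) : PairWreathProduct n M :=
  ⟨Pi.mulSingle (adjPair i) g, adjSwap n i⟩

theorem linkingGen_mul_comm (g : M) {i j : Fin (n - 1)} (h : (i : ℕ) + 1 < j) :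
    linkingGen g i * linkingGen g j = linkingGen g j * linkingGen g i := by
  ext : 1
  · simp only [mul_left, linkingGen, mulAutArrow_mulSingle, mul_comm,
      adjSwap_smul_adjPair_of_far (Or.inl h), adjSwap_smul_adjPair_of_far (Or.inr h)]
  · exact adjSwap_mul_comm h

theorem linkingGen_braid (g : M) {i j : Fin (n - 1)} (h : (i : ℕ) + 1 = j) :
    linkingGen g i * linkingGen g j * linkingGen g i =
      linkingGen g j * linkingGen g i * linkingGen g j := by
  obtain ⟨h1, h2, h3⟩ := adjSwap_smul_adjPair_braid h
  ext : 1
  · simp only [mul_left, mul_right, linkingGen, map_mul, MulAut.mul_apply, mulAutArrow_mulSingle]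
    rw [h2, h3, h1]
    simp only [mul_comm, mul_left_comm]
  · exact adjSwap_braid h

theorem linkingGen_rels (g : M) :
    ∀ r ∈ braidRels n, FreeGroup.lift (linkingGen g) r = 1 := by
  rintro r ⟨i, j, ⟨h, rfl⟩ | ⟨h, rfl⟩⟩ <;>
    simp only [map_mul, map_inv, FreeGroup.lift_apply_of, mul_inv_eq_one]
  · rw [mul_inv_eq_iff_eq_mul, linkingGen_mul_comm g h]
  · exact linkingGen_braid g h

def linkingHom (g : M) : BraidGroup n →* PairWreathProduct n M :=
  PresentedGroup.toGroup (linkingGen_rels g)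

theorem linkingHom_braidGen (g : M) (i : Fin (n - 1)) :
    linkingHom g (braidGen i) = linkingGen g i :=
  PresentedGroup.toGroup.of _

theorem linkingHom_braidGen_sq (g : M) (i : Fin (n - 1)) :
    linkingHom g (braidGen i ^ 2) = inl (mulSingleSymm (adjPair i) g) := by
  rw [sq, map_mul, linkingHom_braidGen]
  ext : 1
  · simp only [mul_left, left_inl, linkingGen, mulAutArrow_mulSingle, adjSwap_smul_adjPair_self,
      mulSingleSymm]
  · exact Equiv.swap_mul_self _ _

theorem linkingHom_right (hθ : ∀ i : Fin (n - 1), θ (braidGen i) = adjSwap n i) (g : M)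
    (x : BraidGroup n) : (linkingHom g x).right = θ x :=
  DFunLike.congr_fun (PresentedGroup.ext (φ := rightHom.comp (linkingHom g)) (ψ := θ) fun i => by
    rw [MonoidHom.comp_apply, rightHom_eq_right]; exact (hθ i).symm ▸ rfl) x

theorem theta_pureGenConjugator_smul_adjPair
    (hθ : ∀ i : Fin (n - 1), θ (braidGen i) = adjSwap n i) {i j : ℕ} (hij : i < j) (hj : j < n) :
    θ (pureGenConjugator n i j) • adjPair ⟨i, by omega⟩ =
      ((⟨i, by omega⟩, ⟨j, hj⟩) : Fin n × Fin n) := by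
  induction j, hij using Nat.le_induction with
  | base => rw [pureGenConjugator_of_le le_rfl, map_one, one_smul]; rfl
  | succ j hij ih =>
    rw [pureGenConjugator_succ hij, map_mul, mul_smul, ih (by omega),
      braidGen'_of_lt (by omega), hθ]
    ext <;> simp only [Prod.smul_mk, Equiv.Perm.smul_def, adjSwap_apply_val] <;>
      split_ifs <;> omega

theorem linkingHom_pureGen (hθ : ∀ i : Fin (n - 1), θ (braidGen i) = adjSwap n i) (g : M)
    {i j : ℕ} (hij : i < j) (hj : j < n) :
    linkingHom g (pureGen n i j) = inl (mulSingleSymm (⟨i, by omega⟩, ⟨j, hj⟩) g) := by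
  rw [pureGen_eq_conj, braidGen'_of_lt (by omega), map_mul, map_mul, map_inv,
    linkingHom_braidGen_sq, conj_inl, linkingHom_right hθ, mulAutArrow_mulSingleSymm,
    theta_pureGenConjugator_smul_adjPair hθ hij hj]

theorem linkingHom_of_mem_conjClassA (hθ : ∀ i : Fin (n - 1), θ (braidGen i) = adjSwap n i)
    (g : M) {i j : ℕ} (hij : i < j) (hj : j < n) {u : BraidGroup n}
    (hu : u ∈ conjClassA n θ i j) :
    linkingHom g u = inl (mulSingleSymm (⟨i, by omega⟩, ⟨j, hj⟩) g) := by
  obtain ⟨β, hβ, rfl⟩ := hu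
  rw [map_mul, map_mul, map_inv, linkingHom_pureGen hθ g hij hj, conj_inl, linkingHom_right hθ,
    MonoidHom.mem_ker.1 hβ, map_one, MulAut.one_apply]

theorem disjoint_conjClassA (hθ : ∀ i : Fin (n - 1), θ (braidGen i) = adjSwap n i)
    {i j r s : ℕ} (hij : i < j) (hj : j < n) (hrs : r < s) (hs : s < n) (hne : (i, j) ≠ (r, s)) :
    Disjoint (conjClassA n θ i j) (conjClassA n θ r s) := by
  rw [Set.disjoint_left]
  intro u hu hu'
  have h := (linkingHom_of_mem_conjClassA hθ (Multiplicative.ofAdd (1 : ℤ)) hij hj hu).symm.trans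
    (linkingHom_of_mem_conjClassA hθ _ hrs hs hu')
  have h_ij := congr_fun (inl_injective h) (⟨i, by omega⟩, ⟨j, hj⟩)
  rw [mulSingleSymm_apply_self (Fin.ne_of_val_ne hij.ne),
    mulSingleSymm_apply_of_ne (by simpa [Fin.ext_iff] using hne)
      (by simp only [Prod.swap_prod_mk, ne_eq, Prod.mk.injEq, Fin.mk.injEq]; omega)] at h_ij
  exact one_ne_zero (ofAdd_eq_one.1 h_ij)

end Linking

end BraidGroup

/-- **Lemma 3.2.** `Υ` is the disjoint union of the conjugacy classes `Υ_{ij}` of the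
standard pure braid generators `A_{ij}` (`0 ≤ i < j < n`, 0-indexed) under the pure
braid group `PB_n = ker θ`. -/
theorem UpsilonSet_eq_disjoint_union_conjClasses (n : ℕ)
    (θ : BraidGroup n →* Equiv.Perm (Fin n))
    (hθ : ∀ i : Fin (n - 1), θ (braidGen i) = adjSwap n i) :
    (UpsilonSet n = {u | ∃ i j : ℕ, i < j ∧ j < n ∧ u ∈ conjClassA n θ i j}) ∧
    (∀ i j r s : ℕ, i < j → j < n → r < s → s < n → (i, j) ≠ (r, s) →
      Disjoint (conjClassA n θ i j) (conjClassA n θ r s)) :=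
  ⟨BraidGroup.upsilonSet_eq_pureGenConjugates hθ, fun _ _ _ _ hij hj hrs hs hne =>
    BraidGroup.disjoint_conjClassA hθ hij hj hrs hs hne⟩
end
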